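/- arXiv:1111.6655 — 4 statements merged into one kernel-verified Lean document; each statement's English description precedes it below -/
import Mathlib

section
/- Let n ≥ 1, let g : ℂⁿ → ℂ be a holomorphic function, and let x₀ ∈ ℂⁿ satisfy g(x₀) = 0. Fix s ∈ ℂⁿ. Then: (a) there is a neighbourhood V of x₀ such that for every x ∈ V with x ≠ x₀ and g(x) ≠ 0, one has g(x + g(x)²·s) ≠ 0; and (b) the function x ↦ 1/g(x) − 1/g(x + g(x)²·s) tends to Dg(x₀)(s) (the Fréchet derivative of g at x₀ applied to s) as x tends to x₀ within the set {x ∈ ℂⁿ : g(x) ≠ 0, g(x + g(x)²·s) ≠ 0}. -/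
/-!
A holomorphic function on a finite-dimensional complex space is `C¹`: by Weierstrass' theorem
the derivatives of its restrictions to parallel complex lines depend continuously on the line.
Hence `g` is strictly differentiable at `x₀`, so with `τ = g(x)² → 0` one has
`g(x + τ s) = g(x) + τ (Dg(x₀) s + o(1))`. Dividing by `g(x)` shows `g(x + τ s) / g(x) → 1`,
which gives (a), and `1/g(x) - 1/g(x + τ s)` is the difference quotient divided by that ratio,
which gives (b).
-/

open Filter Topology

theorem Differentiable.continuous_fderiv_apply {E F : Type*} [NormedAddCommGroup E]
    [NormedSpace ℂ E] [NormedAddCommGroup F] [NormedSpace ℂ F] [CompleteSpace F] {g : E → F}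
    (hg : Differentiable ℂ g) (v : E) : Continuous fun y => fderiv ℂ g y v := by
  have hgc := hg.continuous
  let line : C(E, C(ℂ, F)) :=
    ContinuousMap.curry ⟨fun p : E × ℂ => g (p.1 + p.2 • v), by fun_prop⟩
  have hline (y : E) (t : ℂ) : HasDerivAt (line y) (fderiv ℂ g (y + t • v) v) t :=
    (hg _).hasFDerivAt.comp_hasDerivAt t <| by
      simpa using ((hasDerivAt_id t).smul_const v).const_add y
  refine continuous_iff_continuousAt.mpr fun y₀ => ?_
  have hlu : TendstoLocallyUniformlyOn (fun y => ⇑(line y)) (line y₀) (𝓝 y₀) Set.univ :=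
    tendstoLocallyUniformlyOn_univ.mpr
      (ContinuousMap.tendsto_iff_tendstoLocallyUniformly.mp (line.continuous.tendsto y₀))
  have hline_diff : ∀ᶠ y in 𝓝 y₀, DifferentiableOn ℂ (line y) Set.univ :=
    .of_forall fun y t _ => (hline y t).differentiableAt.differentiableWithinAt
  have hderiv := (hlu.deriv hline_diff isOpen_univ).tendsto_at (Set.mem_univ 0)
  simp only [Function.comp_def, (hline _ 0).deriv, zero_smul, add_zero] at hderiv
  exact hderiv

theorem Differentiable.contDiff_one {E F : Type*} [NormedAddCommGroup E] [NormedSpace ℂ E]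
    [FiniteDimensional ℂ E] [NormedAddCommGroup F] [NormedSpace ℂ F] [CompleteSpace F]
    {g : E → F} (hg : Differentiable ℂ g) : ContDiff ℂ 1 g :=
  contDiff_one_iff_fderiv.mpr ⟨hg, continuous_clm_apply.mpr hg.continuous_fderiv_apply⟩

theorem HasStrictFDerivAt.tendsto_inv_smul_sub {α 𝕜 E F : Type*} [NontriviallyNormedField 𝕜]
    [NormedAddCommGroup E] [NormedSpace 𝕜 E] [NormedAddCommGroup F] [NormedSpace 𝕜 F]
    {f : E → F} {f' : E →L[𝕜] F} {a : E} (hf : HasStrictFDerivAt f f' a) {l : Filter α}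
    {x : α → E} {τ : α → 𝕜} (hx : Tendsto x l (𝓝 a)) (hτ : Tendsto τ l (𝓝 0))
    (hτ₀ : ∀ᶠ i in l, τ i ≠ 0) (v : E) :
    Tendsto (fun i => (τ i)⁻¹ • (f (x i + τ i • v) - f (x i))) l (𝓝 (f' v)) := by
  have hpair : Tendsto (fun i => (x i + τ i • v, x i)) l (𝓝 (a, a)) := by
    simpa using (hx.add (hτ.smul_const v)).prodMk_nhds hx
  have hrem : (fun i => f (x i + τ i • v) - f (x i) - τ i • f' v) =o[l] τ := by
    have hstep : ((fun p : E × E => p.1 - p.2) ∘ fun i => (x i + τ i • v, x i)) =O[l] τ :=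
      Asymptotics.isBigO_of_le' (c := ‖v‖) l fun i => by simp [norm_smul, mul_comm]
    simpa [Function.comp_def] using (hf.isLittleO.comp_tendsto hpair).trans_isBigO hstep
  have := hrem.tendsto_inv_smul_nhds_zero.add_const (f' v)
  rw [zero_add] at this
  refine this.congr' ?_
  filter_upwards [hτ₀] with i hi
  rw [smul_sub, smul_smul, inv_mul_cancel₀ hi, one_smul, sub_add_cancel]

section
variable {α 𝕜 : Type*} [NormedField 𝕜] {l : Filter α} {u v : α → 𝕜} {L : 𝕜}

theorem tendsto_div_nhds_one_of_inv_sq_mul_sub (hu : Tendsto u l (𝓝 0))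
    (hu₀ : ∀ᶠ i in l, u i ≠ 0) (hd : Tendsto (fun i => (u i ^ 2)⁻¹ * (v i - u i)) l (𝓝 L)) :
    Tendsto (fun i => v i / u i) l (𝓝 1) := by
  have h := (hu.mul hd).const_add 1
  rw [zero_mul, add_zero] at h
  refine h.congr' ?_
  filter_upwards [hu₀] with i hi
  field_simp
  ring

theorem eventually_ne_zero_of_inv_sq_mul_sub (hu : Tendsto u l (𝓝 0))
    (hu₀ : ∀ᶠ i in l, u i ≠ 0) (hd : Tendsto (fun i => (u i ^ 2)⁻¹ * (v i - u i)) l (𝓝 L)) :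
    ∀ᶠ i in l, v i ≠ 0 :=
  ((tendsto_div_nhds_one_of_inv_sq_mul_sub hu hu₀ hd).eventually_ne one_ne_zero).mono
    fun _ hi => left_ne_zero_of_mul (by rwa [div_eq_mul_inv] at hi)

theorem tendsto_one_div_sub_one_div_of_inv_sq_mul_sub (hu : Tendsto u l (𝓝 0))
    (hu₀ : ∀ᶠ i in l, u i ≠ 0) (hd : Tendsto (fun i => (u i ^ 2)⁻¹ * (v i - u i)) l (𝓝 L)) :
    Tendsto (fun i => 1 / u i - 1 / v i) l (𝓝 L) := by
  have h := hd.div (tendsto_div_nhds_one_of_inv_sq_mul_sub hu hu₀ hd) one_ne_zero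
  rw [div_one] at h
  refine h.congr' ?_
  filter_upwards [hu₀, eventually_ne_zero_of_inv_sq_mul_sub hu hu₀ hd] with i hui hvi
  rw [Pi.div_apply]
  field_simp

end

theorem localisation_lemma_general (n : ℕ)
    (g : (Fin n → ℂ) → ℂ) (hg : Differentiable ℂ g)
    (x₀ : Fin n → ℂ) (hx₀ : g x₀ = 0) (s : Fin n → ℂ) :
    (∃ V ∈ 𝓝 x₀, ∀ x ∈ V, x ≠ x₀ → g x ≠ 0 → g (x + (g x) ^ 2 • s) ≠ 0) ∧
    Tendsto (fun x => 1 / g x - 1 / g (x + (g x) ^ 2 • s))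
      (𝓝[{x | x ≠ x₀ ∧ g x ≠ 0 ∧ g (x + (g x) ^ 2 • s) ≠ 0}] x₀)
      (𝓝 (fderiv ℂ g x₀ s)) := by
  have hg_lim : Tendsto g (𝓝[{x | g x ≠ 0}] x₀) (𝓝 0) :=
    hx₀ ▸ hg.continuous.continuousWithinAt
  have hg_ne : ∀ᶠ x in 𝓝[{x | g x ≠ 0}] x₀, g x ≠ 0 := self_mem_nhdsWithin
  have hquot : Tendsto (fun x => (g x ^ 2)⁻¹ * (g (x + g x ^ 2 • s) - g x))
      (𝓝[{x | g x ≠ 0}] x₀) (𝓝 (fderiv ℂ g x₀ s)) :=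
    (hg.contDiff_one.contDiffAt.hasStrictFDerivAt one_ne_zero).tendsto_inv_smul_sub
      (tendsto_id.mono_left nhdsWithin_le_nhds) (by simpa using hg_lim.pow 2)
      (hg_ne.mono fun _ => pow_ne_zero 2) s
  refine ⟨?_, ?_⟩
  · obtain ⟨V, hV, hVg⟩ := (eventually_nhdsWithin_iff.mp
      (eventually_ne_zero_of_inv_sq_mul_sub hg_lim hg_ne hquot)).exists_mem
    exact ⟨V, hV, fun x hx _ => hVg x hx⟩
  · exact (tendsto_one_div_sub_one_div_of_inv_sq_mul_sub hg_lim hg_ne hquot).mono_left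
      (nhdsWithin_mono _ fun _ hx => hx.2.1)

/-- Localisation lemma: for holomorphic `g : ℂⁿ → ℂ` with `g x₀ = 0` and fixed `s`,
(a) near `x₀`, `g (x + g(x)² s) ≠ 0` whenever `x ≠ x₀` and `g x ≠ 0`; and
(b) `1/g(x) − 1/g(x + g(x)² s) → Dg(x₀)(s)` as `x → x₀` within the set where both
denominators are nonzero. -/
theorem localisation_lemma (n : ℕ) (hn : 1 ≤ n)
    (g : (Fin n → ℂ) → ℂ) (hg : Differentiable ℂ g)
    (x₀ : Fin n → ℂ) (hx₀ : g x₀ = 0) (s : Fin n → ℂ) :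
    (∃ V ∈ 𝓝 x₀, ∀ x ∈ V, x ≠ x₀ → g x ≠ 0 → g (x + (g x) ^ 2 • s) ≠ 0) ∧
    Tendsto (fun x => 1 / g x - 1 / g (x + (g x) ^ 2 • s))
      (𝓝[{x | x ≠ x₀ ∧ g x ≠ 0 ∧ g (x + (g x) ^ 2 • s) ≠ 0}] x₀)
      (𝓝 (fderiv ℂ g x₀ s)) :=
  localisation_lemma_general n g hg x₀ hx₀ s
end

section
/- Define p : ℂ³ → ℂ by p(x, y, z) = x·y·z − x − z. Then the map Φ : ℂ* × p⁻¹(1) → ℂ³ given by Φ(λ, (x, y, z)) = (λ·x, λ⁻¹·y, λ·z), where ℂ* = ℂ \ {0}, satisfies p(Φ(λ, (x, y, z))) = λ for all inputs, and Φ is a bijection from ℂ* × p⁻¹(1) onto the set {v ∈ ℂ³ : p(v) ≠ 0}. -/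
/-!
The function `p(x, y, z) = xyz − x − z` is homogeneous of degree one for the scaling
`λ • (x, y, z) = (λx, λ⁻¹y, λz)`, i.e. `p(λ • v) = λ p(v)`. For any such function `f`, the
map `(λ, w) ↦ λ • w` is a bijection from `K* × f⁻¹(1)` onto `{f ≠ 0}`: its inverse sends
`v` to `(f v, (f v)⁻¹ • v)`.
-/

namespace ScalingBijection

variable {K : Type*} [Field K]

def scale (l : K) (v : K × K × K) : K × K × K := (l * v.1, l⁻¹ * v.2.1, l * v.2.2)

lemma scale_one (v : K × K × K) : scale 1 v = v := by
  simp [scale]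

lemma scale_scale (l m : K) (v : K × K × K) : scale l (scale m v) = scale (l * m) v := by
  simp only [scale, mul_inv, Prod.mk.injEq]
  refine ⟨?_, ?_, ?_⟩ <;> ring

lemma scale_inv_scale {l : K} (hl : l ≠ 0) (v : K × K × K) : scale l⁻¹ (scale l v) = v := by
  rw [scale_scale, inv_mul_cancel₀ hl, scale_one]

lemma scale_scale_inv {l : K} (hl : l ≠ 0) (v : K × K × K) : scale l (scale l⁻¹ v) = v := by
  rw [scale_scale, mul_inv_cancel₀ hl, scale_one]

def ScaleHomogeneous (f : K × K × K → K) : Prop :=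
  ∀ l v, l ≠ 0 → f (scale l v) = l * f v

section Homogeneous

variable {f : K × K × K → K} (hf : ScaleHomogeneous f)
include hf

lemma ScaleHomogeneous.apply_scale_of_apply_eq_one {l : K} {w : K × K × K} (hl : l ≠ 0)
    (hw : f w = 1) :
    f (scale l w) = l := by
  rw [hf l w hl, hw, mul_one]

theorem ScaleHomogeneous.bijOn_scale :
    Set.BijOn (fun q : K × (K × K × K) => scale q.1 q.2)
      {q | q.1 ≠ 0 ∧ f q.2 = 1} {v | f v ≠ 0} := by
  refine ⟨?mapsTo, ?injOn, ?surjOn⟩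
  case mapsTo =>
    rintro ⟨l, w⟩ ⟨hl : l ≠ 0, hw : f w = 1⟩
    simpa [hf.apply_scale_of_apply_eq_one hl hw] using hl
  case injOn =>
    rintro ⟨l, w⟩ ⟨hl : l ≠ 0, hw : f w = 1⟩ ⟨l', w'⟩ ⟨hl' : l' ≠ 0, hw' : f w' = 1⟩
      (h : scale l w = scale l' w')
    have hll' : l = l' := by
      rw [← hf.apply_scale_of_apply_eq_one hl hw, h, hf.apply_scale_of_apply_eq_one hl' hw']
    subst hll'
    have hww' : w = w' := by
      rw [← scale_inv_scale hl w, h, scale_inv_scale hl w']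
    subst hww'
    rfl
  case surjOn =>
    intro v (hv : f v ≠ 0)
    refine ⟨(f v, scale (f v)⁻¹ v), ⟨hv, ?_⟩, scale_scale_inv hv v⟩
    rw [hf _ _ (inv_ne_zero hv), inv_mul_cancel₀ hv]

end Homogeneous

def cubic (v : K × K × K) : K := v.1 * v.2.1 * v.2.2 - v.1 - v.2.2

lemma scaleHomogeneous_cubic : ScaleHomogeneous (cubic (K := K)) := by
  intro l v hl
  simp only [cubic, scale]
  field_simp

end ScalingBijection

open ScalingBijection in
/-- For `p(x, y, z) = xyz − x − z`, the scaling map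
`Φ(λ, (x, y, z)) = (λx, λ⁻¹y, λz)` satisfies `p ∘ Φ = λ` on `ℂ* × p⁻¹(1)` and is a
bijection from `ℂ* × p⁻¹(1)` onto `{p ≠ 0}`. -/
theorem scaling_bijection (p : ℂ × ℂ × ℂ → ℂ)
    (hp : ∀ x y z : ℂ, p (x, y, z) = x * y * z - x - z)
    (Φ : ℂ × (ℂ × ℂ × ℂ) → ℂ × ℂ × ℂ)
    (hΦ : ∀ l x y z : ℂ, Φ (l, (x, y, z)) = (l * x, l⁻¹ * y, l * z)) :
    (∀ q ∈ {q : ℂ × (ℂ × ℂ × ℂ) | q.1 ≠ 0 ∧ p q.2 = 1}, p (Φ q) = q.1) ∧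
    Set.BijOn Φ {q : ℂ × (ℂ × ℂ × ℂ) | q.1 ≠ 0 ∧ p q.2 = 1} {v : ℂ × ℂ × ℂ | p v ≠ 0} := by
  obtain rfl : p = cubic := funext fun ⟨x, y, z⟩ => hp x y z
  obtain rfl : Φ = fun q => scale q.1 q.2 := funext fun ⟨l, x, y, z⟩ => hΦ l x y z
  exact ⟨fun q hq => scaleHomogeneous_cubic.apply_scale_of_apply_eq_one hq.1 hq.2,
    scaleHomogeneous_cubic.bijOn_scale⟩
end

section
/- Let φ : ℂ × ℂ → ℂ be defined by φ(a, t) = (exp(a·t) − 1)/a when a ≠ 0 and φ(0, t) = t. Then for all a, y, t ∈ ℂ with a·y ≠ 1, one has a·(y·exp(t·a) − φ(a, t)) ≠ 1. Consequently, if X is a set, g : X → ℂ any function, and Ω = {(x, y) ∈ X × ℂ : g(x)·y ≠ 1}, then for every (x, y) ∈ Ω and every t ∈ ℂ the point (x, y·exp(t·g(x)) − φ(g(x), t)) again lies in Ω. -/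
/-- The fibre spray `s(x, y, t) = (x, y·e^{t·g(x)} − φ(g(x), t))` maps the complement of the
graph of `1/g` into itself. -/
theorem spray_maps_into_complement (φ : ℂ × ℂ → ℂ)
    (hφ : ∀ a t : ℂ, φ (a, t) = if a = 0 then t else (Complex.exp (a * t) - 1) / a) :
    (∀ a y t : ℂ, a * y ≠ 1 → a * (y * Complex.exp (t * a) - φ (a, t)) ≠ 1) ∧
    (∀ (X : Type) (g : X → ℂ),
      ∀ q ∈ {q : X × ℂ | g q.1 * q.2 ≠ 1}, ∀ t : ℂ,
        (q.1, q.2 * Complex.exp (t * g q.1) - φ (g q.1, t)) ∈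
          {q : X × ℂ | g q.1 * q.2 ≠ 1}) := by
  have key : ∀ a y t : ℂ, a * y ≠ 1 → a * (y * Complex.exp (t * a) - φ (a, t)) ≠ 1 := by
    intro a y t h
    rcases eq_or_ne a 0 with rfl | ha
    · simp
    · rw [hφ, if_neg ha]
      have : a * (y * Complex.exp (t * a) - (Complex.exp (a * t) - 1) / a)
          = Complex.exp (a * t) * (a * y - 1) + 1 := by
        field_simp
        ring_nf
      rw [this]
      intro hc
      have : Complex.exp (a * t) * (a * y - 1) = 0 := by linear_combination hc
      rcases mul_eq_zero.mp this with h1 | h1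
      · exact Complex.exp_ne_zero _ h1
      · exact h (by linear_combination h1)
  refine ⟨key, ?_⟩
  intro X g q hq t
  exact key (g q.1) q.2 t hq
end

section
/- Let ν ≥ 1 be an integer. Define h, k : ℂ² → ℂ by h(x, y) = x and k(x, y) = x·y^ν − 1; these holomorphic functions have no common zeros. Then there is no holomorphic function f : ℂ² → ℂ such that h(x, y) − k(x, y)·f(x, y) ≠ 0 for all (x, y) ∈ ℂ². Equivalently, the meromorphic function m_ν(x, y) = x/(x·y^ν − 1) on ℂ² cannot be written in the form m_ν = f + 1/g with f, g holomorphic on ℂ². -/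
/-!
If `F = h - k f` never vanished, then `g w = F (w̄ ^ ν, w)` would be a continuous nonvanishing
function on `ℂ`. On the unit circle `w̄ ^ ν w ^ ν = 1`, so the disc `w ↦ (w̄ ^ ν, w)` has its
boundary in `{k = 0}`, where `F = h`; hence `g w = w̄ ^ ν = w ^ (-ν)` there. But a nonvanishing
function on the simply connected plane has a continuous logarithm, so its restriction to the
circle has winding number zero, whereas `w ^ (-ν)` winds `-ν` times.
-/

open Complex ComplexConjugate Metric Set Real

namespace Complex

theorem exists_continuous_exp_comp_eq {X : Type*} [TopologicalSpace X] [SimplyConnectedSpace X]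
    [LocallyPathConnectedSpace X] {g : X → ℂ} (hg : Continuous g) (hg₀ : ∀ x, g x ≠ 0) :
    ∃ L : X → ℂ, Continuous L ∧ ∀ x, exp (L x) = g x := by
  obtain ⟨x₀⟩ := (inferInstance : Nonempty X)
  obtain ⟨L, ⟨-, hL⟩, -⟩ := isCoveringMapOn_exp.existsUnique_continuousMap_lifts ⟨g, hg⟩
    (exp_log (hg₀ x₀)) hg₀
  exact ⟨L, L.continuous, congrFun hL⟩

theorem sub_eq_sub_of_exp_eq_exp {X : Type*} [TopologicalSpace X] [PreconnectedSpace X]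
    {L M : X → ℂ} (hL : Continuous L) (hM : Continuous M) (h : ∀ x, exp (L x) = exp (M x))
    (x y : X) : L x - M x = L y - M y := by
  have hmem : ∀ x, L x - M x ∈ AddSubgroup.zmultiples (2 * π * I) := fun x ↦ by
    obtain ⟨n, hn⟩ := exp_eq_exp_iff_exists_int.1 (h x)
    exact ⟨n, by simp [hn]⟩
  have := NormedSpace.discreteTopology_zmultiples (2 * π * I)
  exact congrArg Subtype.val <| PreconnectedSpace.constant inferInstance
    (f := fun x ↦ (⟨L x - M x, hmem x⟩ : AddSubgroup.zmultiples (2 * π * I))) (by fun_prop)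

theorem not_eqOn_sphere_zpow {n : ℤ} (hn : n ≠ 0) {g : ℂ → ℂ} (hg : Continuous g)
    (hg₀ : ∀ z, g z ≠ 0) : ¬EqOn g (· ^ n) (sphere 0 1) := by
  intro hgn
  obtain ⟨L, hL, hLg⟩ := exists_continuous_exp_comp_eq hg hg₀
  have hlog : ∀ θ : ℝ, exp (L (exp (θ * I))) = exp (n * (θ * I)) := fun θ ↦ by
    rw [hLg, hgn (by simp), exp_int_mul]
  have := sub_eq_sub_of_exp_eq_exp (by fun_prop) (by fun_prop) hlog (2 * π) 0
  simp [exp_two_pi_mul_I, hn, pi_ne_zero] at this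

end Complex

/-- The meromorphic function `m_ν(x, y) = x/(x·y^ν − 1)` on `ℂ²` cannot be written as
`f + 1/g` with `f, g` holomorphic: writing `h(x, y) = x` and `k(x, y) = x·y^ν − 1`,
these have no common zeros, and there is no holomorphic `f` with `h − k·f` nowhere
vanishing. -/
theorem no_decomposition (ν : ℕ) (hν : 1 ≤ ν) :
    (∀ x y : ℂ, x ≠ 0 ∨ x * y ^ ν - 1 ≠ 0) ∧
    ¬∃ f : ℂ × ℂ → ℂ, Differentiable ℂ f ∧
      ∀ x y : ℂ, x - (x * y ^ ν - 1) * f (x, y) ≠ 0 := by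
  refine ⟨fun x y ↦ or_iff_not_imp_left.2 fun hx ↦ by simp [not_not.1 hx], ?_⟩
  rintro ⟨f, hf, hF⟩
  set g : ℂ → ℂ := fun w ↦ conj w ^ ν - (conj w ^ ν * w ^ ν - 1) * f (conj w ^ ν, w)
  have hg : Continuous g := by have := hf.continuous; fun_prop
  have hgν : EqOn g (· ^ (-ν : ℤ)) (sphere 0 1) := fun w hw ↦ by
    have hw1 : conj w ^ ν * w ^ ν = 1 := by
      rw [← mul_pow, mul_comm, mul_conj, normSq_eq_norm_sq, mem_sphere_zero_iff_norm.1 hw]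
      simp
    simp only [g, hw1, sub_self, zero_mul, sub_zero, zpow_neg, zpow_natCast]
    exact eq_inv_of_mul_eq_one_left hw1
  exact not_eqOn_sphere_zpow (by omega) hg (fun w ↦ hF _ _) hgν
end
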